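/- For N, h positive integers with h dividing gcd(24, N), the map ρ_{N|h} sending the pair ((a,b;c,d),(λ,μ)) in Γ₀(N) ⋉ ℤ² to e^{-2πi cd/(Nh)} is a group homomorphism from Γ₀(N) ⋉ ℤ² to ℂ^×, and its kernel contains Γ₀(Nh) ⋉ ℤ². -/
import Mathlib

open Complex Real Matrix MatrixGroups

/-- `ρ_{N|h}` applied to a pair `(γ, v)` of a matrix `γ ∈ SL₂(ℤ)` and a vector `v ∈ ℤ²`:
it sends `((a,b;c,d),(λ,μ))` to `e^{-2πi cd/(Nh)}`. -/
noncomputable def rhoNh (N h : ℕ) (γ : SL(2, ℤ)) (_v : Fin 2 → ℤ) : ℂ :=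
  Complex.exp (-(2 * Real.pi * Complex.I) *
    (((γ : Matrix (Fin 2) (Fin 2) ℤ) 1 0 * (γ : Matrix (Fin 2) (Fin 2) ℤ) 1 1 : ℤ) : ℂ) /
      ((N : ℂ) * (h : ℂ)))

lemma exp_congr_aux (D : ℕ) (hD : 0 < D) (m n : ℤ) (hd : (D : ℤ) ∣ (m - n)) :
    Complex.exp (-(2 * Real.pi * Complex.I) * (m : ℂ) / D) =
      Complex.exp (-(2 * Real.pi * Complex.I) * (n : ℂ) / D) := by
  obtain ⟨k, hk⟩ := hd
  have hm : (m : ℂ) = n + D * k := by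
    have : m = n + D * k := by linarith [hk]
    exact_mod_cast congrArg (Int.cast : ℤ → ℂ) this
  have hD' : (D : ℂ) ≠ 0 := Nat.cast_ne_zero.mpr hD.ne'
  have : -(2 * Real.pi * Complex.I) * (m : ℂ) / D =
      -(2 * Real.pi * Complex.I) * (n : ℂ) / D + (-k : ℤ) * (2 * Real.pi * Complex.I) := by
    rw [hm]; push_cast; field_simp; ring
  rw [this, Complex.exp_add, Complex.exp_int_mul_two_pi_mul_I, mul_one]

lemma unit_sq (h : ℕ) (hd : h ∣ 24) : ∀ x y : ZMod h, x * y = 1 → x * x = 1 := by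
  have h1 : 1 ≤ h := Nat.pos_of_dvd_of_pos hd (by norm_num)
  have h24 : h ≤ 24 := Nat.le_of_dvd (by norm_num) hd
  interval_cases h <;> first | (exfalso; revert hd; decide) | decide

/-- For `h ∣ gcd(24, N)`, the map `ρ_{N|h}` is a homomorphism on the Jacobi group
`Γ₀(N) ⋉ ℤ²` (with product `[γ₁,v₁][γ₂,v₂] = [γ₁γ₂, v₁γ₂ + v₂]`), taking values in `ℂ^×`,
and its kernel contains `Γ₀(Nh) ⋉ ℤ²`. -/
theorem rhoNh_hom (N h : ℕ) (hN : 0 < N) (hh : 0 < h) (hdvd : h ∣ Nat.gcd 24 N) :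
    (∀ γ : SL(2, ℤ), ∀ v : Fin 2 → ℤ, rhoNh N h γ v ≠ 0) ∧
    (∀ γ₁ γ₂ : SL(2, ℤ),
        (N : ℤ) ∣ (γ₁ : Matrix (Fin 2) (Fin 2) ℤ) 1 0 →
        (N : ℤ) ∣ (γ₂ : Matrix (Fin 2) (Fin 2) ℤ) 1 0 →
        ∀ v₁ v₂ : Fin 2 → ℤ,
          rhoNh N h (γ₁ * γ₂) (Matrix.vecMul v₁ (γ₂ : Matrix (Fin 2) (Fin 2) ℤ) + v₂) =
            rhoNh N h γ₁ v₁ * rhoNh N h γ₂ v₂) ∧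
    (∀ γ : SL(2, ℤ), ((N * h : ℕ) : ℤ) ∣ (γ : Matrix (Fin 2) (Fin 2) ℤ) 1 0 →
        ∀ v : Fin 2 → ℤ, rhoNh N h γ v = 1) := by
  have h24 : h ∣ 24 := hdvd.trans (Nat.gcd_dvd_left _ _)
  have hhN : h ∣ N := hdvd.trans (Nat.gcd_dvd_right _ _)
  have hNh : 0 < N * h := Nat.mul_pos hN hh
  have hcast : ∀ (γ : SL(2,ℤ)) (v : Fin 2 → ℤ), rhoNh N h γ v =
      Complex.exp (-(2 * Real.pi * Complex.I) *
        (((γ : Matrix (Fin 2) (Fin 2) ℤ) 1 0 * (γ : Matrix (Fin 2) (Fin 2) ℤ) 1 1 : ℤ) : ℂ) /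
        ((N * h : ℕ) : ℂ)) := by
    intro γ v; unfold rhoNh; push_cast; ring_nf
  refine ⟨fun γ v => Complex.exp_ne_zero _, ?_, ?_⟩
  · intro γ₁ γ₂ hc1 hc2 v₁ v₂
    set a₁ := (γ₁ : Matrix (Fin 2) (Fin 2) ℤ) 0 0 with ha₁
    set b₁ := (γ₁ : Matrix (Fin 2) (Fin 2) ℤ) 0 1 with hb₁
    set c₁ := (γ₁ : Matrix (Fin 2) (Fin 2) ℤ) 1 0 with hc₁
    set d₁ := (γ₁ : Matrix (Fin 2) (Fin 2) ℤ) 1 1 with hd₁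
    set a₂ := (γ₂ : Matrix (Fin 2) (Fin 2) ℤ) 0 0 with ha₂
    set b₂ := (γ₂ : Matrix (Fin 2) (Fin 2) ℤ) 0 1 with hb₂
    set c₂ := (γ₂ : Matrix (Fin 2) (Fin 2) ℤ) 1 0 with hc₂
    set d₂ := (γ₂ : Matrix (Fin 2) (Fin 2) ℤ) 1 1 with hd₂
    have det₁ : a₁ * d₁ - b₁ * c₁ = 1 := by
      have := γ₁.property; rwa [Matrix.det_fin_two] at this
    have det₂ : a₂ * d₂ - b₂ * c₂ = 1 := by
      have := γ₂.property; rwa [Matrix.det_fin_two] at this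
    have hc : ((γ₁ * γ₂ : SL(2,ℤ)) : Matrix (Fin 2) (Fin 2) ℤ) 1 0 = c₁ * a₂ + d₁ * c₂ := by
      simp [Matrix.SpecialLinearGroup.coe_mul, Matrix.mul_apply, Fin.sum_univ_two,
        hc₁, hd₁, ha₂, hc₂, mul_comm]
    have hd : ((γ₁ * γ₂ : SL(2,ℤ)) : Matrix (Fin 2) (Fin 2) ℤ) 1 1 = c₁ * b₂ + d₁ * d₂ := by
      simp [Matrix.SpecialLinearGroup.coe_mul, Matrix.mul_apply, Fin.sum_univ_two,
        hc₁, hd₁, hb₂, hd₂, mul_comm]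
    -- h divides d₁² - 1
    have hd1 : (h : ℤ) ∣ d₁ * d₁ - 1 := by
      have hc1h : (h : ℤ) ∣ c₁ := dvd_trans (Int.natCast_dvd_natCast.mpr hhN) hc1
      have hc0 : ((c₁ : ℤ) : ZMod h) = 0 := (ZMod.intCast_zmod_eq_zero_iff_dvd _ _).mpr hc1h
      have e : ((a₁ : ZMod h)) * ((d₁ : ZMod h)) - ((b₁ : ZMod h)) * ((c₁ : ZMod h)) = 1 := by
        have h2 : ((a₁ * d₁ - b₁ * c₁ : ℤ) : ZMod h) = ((1 : ℤ) : ZMod h) := by rw [det₁]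
        push_cast at h2; exact_mod_cast h2
      rw [hc0, mul_zero, sub_zero] at e
      have e' : ((d₁ : ZMod h)) * ((a₁ : ZMod h)) = 1 := by rw [mul_comm]; exact e
      have sq := unit_sq h h24 _ _ e'
      have : ((d₁ * d₁ - 1 : ℤ) : ZMod h) = 0 := by push_cast; rw [sq]; ring
      exact (ZMod.intCast_zmod_eq_zero_iff_dvd _ _).mp this
    obtain ⟨k₁, hk₁⟩ := hc1
    obtain ⟨k₂, hk₂⟩ := hc2
    obtain ⟨m, hm⟩ := hhN
    obtain ⟨t, ht⟩ := hd1
    have hNm : (N : ℤ) = (h : ℤ) * (m : ℤ) := by exact_mod_cast hm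
    have key : ((N * h : ℕ) : ℤ) ∣
        ((c₁ * a₂ + d₁ * c₂) * (c₁ * b₂ + d₁ * d₂) - (c₁ * d₁ + c₂ * d₂)) := by
      refine ⟨(m : ℤ) * k₁ * k₁ * a₂ * b₂ + 2 * (m : ℤ) * k₁ * k₂ * d₁ * b₂ + k₂ * d₂ * t, ?_⟩
      push_cast
      linear_combination c₁ * d₁ * det₂ + c₂ * d₂ * ht +
        ((h : ℤ) * d₂ * t + 2 * d₁ * b₂ * c₁) * hk₂ +
        (a₂ * b₂ * (c₁ + (N : ℤ) * k₁) + 2 * d₁ * b₂ * (N : ℤ) * k₂) * hk₁ +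
        ((N : ℤ) * k₁ * k₁ * a₂ * b₂ + 2 * (N : ℤ) * k₁ * k₂ * d₁ * b₂) * hNm
    rw [hcast, hcast, hcast, hc, hd, ← Complex.exp_add]
    have hsum : -(2 * Real.pi * Complex.I) * ((c₁ * d₁ : ℤ) : ℂ) / ((N * h : ℕ) : ℂ) +
        -(2 * Real.pi * Complex.I) * ((c₂ * d₂ : ℤ) : ℂ) / ((N * h : ℕ) : ℂ) =
        -(2 * Real.pi * Complex.I) * ((c₁ * d₁ + c₂ * d₂ : ℤ) : ℂ) / ((N * h : ℕ) : ℂ) := by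
      push_cast; ring
    rw [hsum]
    exact exp_congr_aux (N * h) hNh _ _ key
  · intro γ hc v
    rw [hcast]
    have key : ((N * h : ℕ) : ℤ) ∣ ((γ : Matrix (Fin 2) (Fin 2) ℤ) 1 0 *
        (γ : Matrix (Fin 2) (Fin 2) ℤ) 1 1 - 0) := by
      rw [sub_zero]; exact hc.mul_right _
    rw [exp_congr_aux (N * h) hNh _ 0 key]
    simp
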